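/- For all X ∈ g⊗A and F ∈ g*⊗A*, the element ȷ(X·F) − ι(X)·ȷ(F) of g*⊗F[Γ] lies in g*⊗span_F{q^γ : γ ∈ (Ω₁−Ω₁)\(−Ω₁)}. -/

import Mathlib

/-!
Write `c ω λ = ((xc ω)·(f λ))(y)`. The `ε^ν`-component of `X·F` is `∑_ω c(ω, ν + ω)`, and
`ȷ` puts it at `q^{-ν} = q^{ω - (ν + ω)}`; so `ȷ(X·F)` is exactly the part of
`ι(X)·ȷ(F) = ∑_{ω,λ} c(ω, λ) q^{ω - λ}` coming from the pairs with `λ = ν + ω`, `ν ∈ Ω₁`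
(`ν ↦ ν + ω` is injective). Every remaining pair has `ω - λ ∈ Ω₁ - Ω₁` but `ω - λ ∉ -Ω₁`.
-/

open MvPolynomial

/-- Coercion of a multi-exponent in `ℕ^ℓ` to `ℤ^ℓ`. -/
def zc {ℓ : ℕ} (ω : Fin ℓ → ℕ) : Fin ℓ → ℤ := fun k => (ω k : ℤ)

/-- The coadjoint action of `x ∈ g` on `g*`: `(x · f)(y) = f ⁅y, x⁆`. -/
noncomputable def coadj {F : Type*} [Field F] {g : Type*} [LieRing g] [LieAlgebra F g]
    (x : g) (φ : Module.Dual F g) : Module.Dual F g :=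
  -(φ ∘ₗ (LieAlgebra.ad F g x : g →ₗ[F] g))

section

variable {ℓ : ℕ}

theorem zc_add (α β : Fin ℓ → ℕ) : zc (α + β) = zc α + zc β := by
  funext k
  simp [zc]

theorem zc_injective : Function.Injective (zc (ℓ := ℓ)) := fun α β h =>
  funext fun k => by simpa [zc] using congrFun h k

theorem zc_sub_eq_neg_zc_iff (α β γ : Fin ℓ → ℕ) : zc α - zc β = -zc γ ↔ γ + α = β := by
  rw [← zc_injective.eq_iff, zc_add]
  constructor <;> intro h <;> linear_combination h

end

theorem Finset.sum_dite_add_mem_eq {α M : Type*} [AddCommMonoid M] [Add α] [IsRightCancelAdd α]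
    [DecidableEq α] (s : Finset α) (a : α) (G : s → M) :
    ∑ x : s, (if h : ↑x + a ∈ s then G ⟨↑x + a, h⟩ else 0) =
      ∑ y : s, if ∃ x ∈ s, x + a = ↑y then G y else 0 := by
  have mem_of_ne_zero {x : s} (hx : (if h : ↑x + a ∈ s then G ⟨↑x + a, h⟩ else 0) ≠ 0) :
      ↑x + a ∈ s := by
    by_contra h
    exact hx (dif_neg h)
  refine Finset.sum_bij_ne_zero (fun x _ hx => ⟨x + a, mem_of_ne_zero hx⟩)
    (fun _ _ _ => Finset.mem_univ _)
    (fun x _ _ x' _ _ h => Subtype.ext (add_right_cancel (congrArg Subtype.val h))) ?_ ?_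
  · intro y _ hy
    obtain ⟨x, hx, hxy⟩ : ∃ x ∈ s, x + a = ↑y := by
      by_contra h
      exact hy (if_neg h)
    obtain ⟨y, hy_mem⟩ := y
    subst hxy
    refine ⟨⟨x, hx⟩, Finset.mem_univ _, ?_, rfl⟩
    simpa [hy_mem, hx] using hy
  · intro x _ hx
    rw [dif_pos (mem_of_ne_zero hx), if_pos ⟨x, x.2, rfl⟩]

theorem AddMonoidAlgebra.single_mem_span_single_one {R G : Type*} [Semiring R] {s : Set G} {γ : G}
    (hγ : γ ∈ s) (r : R) :
    AddMonoidAlgebra.single γ r ∈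
      Submodule.span R ((AddMonoidAlgebra.single · (1 : R)) '' s : Set (AddMonoidAlgebra R G)) := by
  simpa using Submodule.smul_mem (Submodule.span R _) r
    (Submodule.subset_span (Set.mem_image_of_mem (AddMonoidAlgebra.single · (1 : R)) hγ))

open AddMonoidAlgebra in
theorem sum_single_neg_sub_sum_single_sub_mem_span {R : Type*} [Ring R] {ℓ : ℕ}
    (Ω₁ : Finset (Fin ℓ → ℕ)) (c : Ω₁ → Ω₁ → R) :
    (∑ ν : Ω₁, single (-zc (ν : Fin ℓ → ℕ))
        (∑ ω : Ω₁, if h : (ν : Fin ℓ → ℕ) + ω ∈ Ω₁ then c ω ⟨_, h⟩ else 0))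
      - (∑ ω : Ω₁, ∑ lam : Ω₁, single (zc (ω : Fin ℓ → ℕ) - zc (lam : Fin ℓ → ℕ)) (c ω lam))
      ∈ Submodule.span R ((fun γ => single γ (1 : R)) ''
          {γ : Fin ℓ → ℤ | (∃ α ∈ Ω₁, ∃ β ∈ Ω₁, γ = zc α - zc β)
            ∧ ¬(∃ β ∈ Ω₁, γ = -(zc β))}) := by
  have reindex : (∑ ν : Ω₁, single (-zc (ν : Fin ℓ → ℕ))
        (∑ ω : Ω₁, if h : (ν : Fin ℓ → ℕ) + ω ∈ Ω₁ then c ω ⟨_, h⟩ else 0)) =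
      ∑ ω : Ω₁, ∑ lam : Ω₁, if ∃ ν ∈ Ω₁, ν + ω = lam
        then single (zc (ω : Fin ℓ → ℕ) - zc (lam : Fin ℓ → ℕ)) (c ω lam) else 0 := by
    have single_sum (ν : Ω₁) : single (-zc (ν : Fin ℓ → ℕ))
        (∑ ω : Ω₁, if h : (ν : Fin ℓ → ℕ) + ω ∈ Ω₁ then c ω ⟨_, h⟩ else 0) =
        ∑ ω : Ω₁, if h : (ν : Fin ℓ → ℕ) + ω ∈ Ω₁
          then single (zc (ω : Fin ℓ → ℕ) - zc ((ν : Fin ℓ → ℕ) + (ω : Fin ℓ → ℕ))) (c ω ⟨_, h⟩)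
          else 0 := by
      rw [← singleAddHom_apply, map_sum]
      refine Finset.sum_congr rfl fun ω _ => ?_
      split_ifs with h
      · rw [singleAddHom_apply, zc_add, sub_add_cancel_right]
      · exact single_zero _
    rw [Finset.sum_congr rfl fun ν _ => single_sum ν, Finset.sum_comm]
    exact Finset.sum_congr rfl fun ω _ =>
      Finset.sum_dite_add_mem_eq Ω₁ ω fun lam =>
        single (zc (ω : Fin ℓ → ℕ) - zc (lam : Fin ℓ → ℕ)) (c ω lam)
  rw [reindex, ← Finset.sum_sub_distrib]
  refine Submodule.sum_mem _ fun ω _ => ?_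
  rw [← Finset.sum_sub_distrib]
  refine Submodule.sum_mem _ fun lam _ => ?_
  split_ifs with h
  · simp
  · rw [zero_sub]
    refine neg_mem (single_mem_span_single_one ?_ _)
    refine ⟨⟨ω, ω.2, lam, lam.2, rfl⟩, ?_⟩
    rintro ⟨β, hβ, hβeq⟩
    exact h ⟨β, hβ, (zc_sub_eq_neg_zc_iff _ _ _).1 hβeq⟩

/-- `F[Γ]` is `AddMonoidAlgebra F (Fin ℓ → ℤ)` with `q^γ = single γ 1`, and an element of
`g* ⊗ F[Γ]` is read through its value at `y ∈ g`. With `X = ∑ xc ω ⊗ τ^ω` and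
`F = ∑ f ω ⊗ ε^ω`, the `ε^ν`-component of `X·F` is `∑_{ω ∈ Ω₁, ν + ω ∈ Ω₁} (xc ω)·(f (ν + ω))`. -/
theorem statement3_general {F : Type*} [Field F] {ℓ : ℕ}
    (Ω₁ : Finset (Fin ℓ → ℕ))
    {g : Type*} [LieRing g] [LieAlgebra F g]
    (xc : ↥Ω₁ → g) (f : ↥Ω₁ → Module.Dual F g) (y : g) :
    (∑ ν : ↥Ω₁, AddMonoidAlgebra.single (-(zc (ν : Fin ℓ → ℕ)))
        ((∑ ω : ↥Ω₁, if h : ((ν : Fin ℓ → ℕ) + (ω : Fin ℓ → ℕ) ∈ Ω₁)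
            then coadj (xc ω) (f ⟨(ν : Fin ℓ → ℕ) + (ω : Fin ℓ → ℕ), h⟩)
            else 0) y))
      - (∑ ω : ↥Ω₁, ∑ lam : ↥Ω₁,
          AddMonoidAlgebra.single (zc (ω : Fin ℓ → ℕ) - zc (lam : Fin ℓ → ℕ))
            ((coadj (xc ω) (f lam)) y))
      ∈ Submodule.span F ((fun γ => AddMonoidAlgebra.single γ (1 : F)) ''
          {γ : Fin ℓ → ℤ | (∃ α ∈ Ω₁, ∃ β ∈ Ω₁, γ = zc α - zc β)
            ∧ ¬(∃ β ∈ Ω₁, γ = -(zc β))}) := by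
  have key := sum_single_neg_sub_sum_single_sub_mem_span Ω₁ fun ω lam => coadj (xc ω) (f lam) y
  simpa only [LinearMap.sum_apply, apply_dite (fun φ : Module.Dual F g => φ y),
    LinearMap.zero_apply] using key

/-- For all `X = ∑_{ω ∈ Ω₁} xc ω ⊗ τ^ω ∈ g ⊗ A` and
`F = ∑_{ω ∈ Ω₁} f ω ⊗ ε^ω ∈ g* ⊗ A*`, the element `ȷ(X·F) - ι(X)·ȷ(F)` of `g* ⊗ F[Γ]`
lies in `g* ⊗ span_F{q^γ : γ ∈ (Ω₁ - Ω₁) \ (-Ω₁)}`.  Here `Γ = ℤ^ℓ`, the group algebra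
`F[Γ]` is modeled as `AddMonoidAlgebra F (Fin ℓ → ℤ)` with `q^γ = single γ 1`;
`ι : g ⊗ A → g ⊗ F[Γ]` sends `x ⊗ τ^ω ↦ x ⊗ q^ω` and `ȷ : g* ⊗ A* → g* ⊗ F[Γ]` sends
`f ⊗ ε^ω ↦ f ⊗ q^{-ω}`; elements of `g* ⊗ F[Γ]` are identified (via finite-dimensionality
of `g`) with maps `g → F[Γ]`, and the stated membership means that the value on each
`y ∈ g` lies in `span_F{q^γ : γ ∈ (Ω₁ - Ω₁) \ (-Ω₁)}`.  The action of `g ⊗ A` on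
`g* ⊗ A*` is `(x ⊗ τ^ω)·(f ⊗ ε^λ) = (x·f) ⊗ (τ^ω·ε^λ)` with `(τ^ω·ε^λ)(τ^γ) = ε^λ(τ^{ω+γ})`,
so that the `ε^ν`-component of `X·F` is `∑_{ω ∈ Ω₁, ν + ω ∈ Ω₁} (xc ω)·(f (ν + ω))`;
the action of `g ⊗ F[Γ]` on `g* ⊗ F[Γ]` is `(x ⊗ q^ω)·(f ⊗ q^λ) = (x·f) ⊗ q^{ω+λ}`. -/
theorem statement3 {F : Type*} [Field F] [CharZero F] {ℓ : ℕ}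
    (Ω₁ : Finset (Fin ℓ → ℕ))
    (hstab : ∀ ω γ : Fin ℓ → ℕ, ω ∉ Ω₁ → ω + γ ∉ Ω₁)
    {g : Type*} [LieRing g] [LieAlgebra F g] [FiniteDimensional F g]
    (xc : ↥Ω₁ → g) (f : ↥Ω₁ → Module.Dual F g) (y : g) :
    (∑ ν : ↥Ω₁, AddMonoidAlgebra.single (-(zc (ν : Fin ℓ → ℕ)))
        ((∑ ω : ↥Ω₁, if h : ((ν : Fin ℓ → ℕ) + (ω : Fin ℓ → ℕ) ∈ Ω₁)
            then coadj (xc ω) (f ⟨(ν : Fin ℓ → ℕ) + (ω : Fin ℓ → ℕ), h⟩)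
            else 0) y))
      - (∑ ω : ↥Ω₁, ∑ lam : ↥Ω₁,
          AddMonoidAlgebra.single (zc (ω : Fin ℓ → ℕ) - zc (lam : Fin ℓ → ℕ))
            ((coadj (xc ω) (f lam)) y))
      ∈ Submodule.span F ((fun γ => AddMonoidAlgebra.single γ (1 : F)) ''
          {γ : Fin ℓ → ℤ | (∃ α ∈ Ω₁, ∃ β ∈ Ω₁, γ = zc α - zc β)
            ∧ ¬(∃ β ∈ Ω₁, γ = -(zc β))}) :=
  statement3_general Ω₁ xc f y
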